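/- (Two-angle Kac/Loeve proposition.) Let (A, φ) be a non-commutative probability space and let (T_1, S_1) and (T_2, S_2) be two-faced pairs in A that are bi-free and satisfy φ(T_k) = 0 = φ(S_k) for k ∈ {1,2}. Fix θ_ℓ, θ_r ∈ (0, π/2) and set T_3 = cos(θ_ℓ)T_1 + sin(θ_ℓ)T_2, S_3 = cos(θ_r)S_1 + sin(θ_r)S_2, T_4 = −sin(θ_ℓ)T_1 + cos(θ_ℓ)T_2, S_4 = −sin(θ_r)S_1 + cos(θ_r)S_2. If (T_3, S_3) and (T_4, S_4) are bi-free, then (T_1, S_1) and (T_2, S_2) are bi-free central limit distributions. -/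

import Mathlib

/-!
The `(ℓ, r)`-cumulants are multilinear and the mixed ones of a bi-free family vanish. Hence, for
`χ` of length `n`, the vector `x = (κ_χ(T₁, S₁), κ_χ(T₂, S₂))` is sent to the corresponding vector
of the rotated pairs `(T₃, S₃), (T₄, S₄)` by the entrywise product `M` over `i` of the rotation
matrices of the angles `θ_{χ(i)}`. Rotating back by `-θ_ℓ, -θ_r` and using bi-freeness of the
rotated pairs gives `x = N M x` for a second matrix `N` of the same kind. Every row of `M` and of
`N` has `ℓ¹`-norm `∏ |cos| + ∏ |sin|`, which is `< 1` once `n ≥ 3`, so `x` is a fixed point of a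
strict contraction of the sup norm and vanishes.
-/

open Finset

namespace BiFreeNL

open scoped Classical

/-- `i` and `j` lie in a common block of `P`. -/
def SameBlock {n : ℕ} (P : Finset (Finset (Fin n))) (i j : Fin n) : Prop :=
  ∃ V ∈ P, i ∈ V ∧ j ∈ V

/-- `P` is a partition of `{1, …, n}` (blocks are nonempty, and every point lies in a
unique block). -/
def IsPartition {n : ℕ} (P : Finset (Finset (Fin n))) : Prop :=
  (∀ V ∈ P, V.Nonempty) ∧ ∀ i : Fin n, ∃! V : Finset (Fin n), V ∈ P ∧ i ∈ V

/-- `P` refines `Q` : every block of `P` is contained in a block of `Q`. -/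
def Refines {n : ℕ} (P Q : Finset (Finset (Fin n))) : Prop :=
  ∀ V ∈ P, ∃ W ∈ Q, V ⊆ W

/-- The rank of `i` in the total order `≺_χ`, which reads the left indices
(`χ = true`) in increasing order followed by the right indices (`χ = false`) in
decreasing order.  This is `s_χ⁻¹`. -/
def chiRank {n : ℕ} (χ : Fin n → Bool) (i : Fin n) : ℕ :=
  if χ i = true then ((univ : Finset (Fin n)).filter fun j => χ j = true ∧ j < i).card
  else ((univ : Finset (Fin n)).filter fun j => χ j = true).card
    + ((univ : Finset (Fin n)).filter fun j => χ j = false ∧ i < j).card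

/-- `P` is a bi-non-crossing partition with respect to `χ`, i.e. `s_χ⁻¹ · P` is
non-crossing; equivalently no two distinct blocks cross with respect to `≺_χ`. -/
def IsBiNonCrossing {n : ℕ} (χ : Fin n → Bool) (P : Finset (Finset (Fin n))) : Prop :=
  IsPartition P ∧
    ∀ u₁ v₁ u₂ v₂ : Fin n,
      chiRank χ u₁ < chiRank χ v₁ → chiRank χ v₁ < chiRank χ u₂ →
        chiRank χ u₂ < chiRank χ v₂ →
        SameBlock P u₁ u₂ → SameBlock P v₁ v₂ → SameBlock P u₁ v₁

/-- The (finite) set `BNC(χ)` of bi-non-crossing partitions with respect to `χ`. -/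
noncomputable def BNC {n : ℕ} (χ : Fin n → Bool) : Finset (Finset (Finset (Fin n))) :=
  Finset.univ.filter fun P => IsBiNonCrossing χ P

/-- The maximal element `1_χ` of `BNC(χ)` : the partition with a single block. -/
def onePart (n : ℕ) : Finset (Finset (Fin n)) := {(Finset.univ : Finset (Fin n))}

/-- `μ` is the Möbius function of the lattice `BNC(χ)` : it vanishes off the
refinement order, and satisfies the two defining convolution identities. -/
def IsMoebius {n : ℕ} (χ : Fin n → Bool)
    (μ : Finset (Finset (Fin n)) → Finset (Finset (Fin n)) → ℂ) : Prop :=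
  (∀ P Q, ¬ Refines P Q → μ P Q = 0) ∧
  (∀ P Q, P ∈ BNC χ → Q ∈ BNC χ → Refines P Q →
    (∑ t ∈ (BNC χ).filter fun t => Refines P t ∧ Refines t Q, μ t Q)
      = if P = Q then 1 else 0) ∧
  (∀ P Q, P ∈ BNC χ → Q ∈ BNC χ → Refines P Q →
    (∑ t ∈ (BNC χ).filter fun t => Refines P t ∧ Refines t Q, μ P t)
      = if P = Q then 1 else 0)

/-- A family of Möbius functions, one for each `n` and `χ`. -/
def MoebiusFamily : Type :=
  ∀ n : ℕ, (Fin n → Bool) → Finset (Finset (Fin n)) → Finset (Finset (Fin n)) → ℂ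

variable {A : Type*} [Ring A] [Algebra ℂ A]

/-- `φ_π(Z_1, …, Z_n) = ∏_{V ∈ π} φ(Z_{k_1} ⋯ Z_{k_m})`, the product over the blocks
`V = {k_1 < ⋯ < k_m}` of `π` of the moments along the blocks. -/
noncomputable def phiPart {n : ℕ} (φ : A →ₗ[ℂ] ℂ) (Z : Fin n → A)
    (P : Finset (Finset (Fin n))) : ℂ :=
  ∏ V ∈ P, φ ((V.sort (· ≤ ·)).map Z).prod

/-- The `(ℓ, r)`-cumulant `κ_P(Z_1, …, Z_n) = ∑_{σ ∈ BNC(χ), σ ≤ P} φ_σ(Z) μ(σ, P)`. -/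
noncomputable def cumulant {n : ℕ} (φ : A →ₗ[ℂ] ℂ) (χ : Fin n → Bool)
    (μ : Finset (Finset (Fin n)) → Finset (Finset (Fin n)) → ℂ)
    (P : Finset (Finset (Fin n))) (Z : Fin n → A) : ℂ :=
  ∑ σ ∈ (BNC χ).filter fun σ => Refines σ P, phiPart φ Z σ * μ σ P


/-- The two-faced pairs `(T 0, S 0)` and `(T 1, S 1)` are bi-freely independent with
respect to `φ` : all mixed `(ℓ,r)`-cumulants vanish. -/
def TwoFacedBiFree {A : Type*} [Ring A] [Algebra ℂ A] (φ : A →ₗ[ℂ] ℂ)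
    (μ : MoebiusFamily) (T S : Fin 2 → A) : Prop :=
  ∀ (n : ℕ), 2 ≤ n → ∀ (χ : Fin n → Bool) (ε : Fin n → Fin 2), (∃ i j, ε i ≠ ε j) →
    cumulant φ χ (μ n χ) (onePart n)
      (fun i => if χ i = true then T (ε i) else S (ε i)) = 0

/-- `(T, S)` is a bi-free central limit distribution : all `(ℓ,r)`-cumulants of order
at least three vanish. -/
def IsBiFreeCentralLimit {A : Type*} [Ring A] [Algebra ℂ A] (φ : A →ₗ[ℂ] ℂ)
    (μ : MoebiusFamily) (T S : A) : Prop :=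
  ∀ (n : ℕ), 3 ≤ n → ∀ χ : Fin n → Bool,
    cumulant φ χ (μ n χ) (onePart n) (fun i => if χ i = true then T else S) = 0

/-- `(T 0, S 0)` and `(T 1, S 1)` have equal second order `(ℓ,r)`-cumulants. -/
def EqualSecondOrderCumulants {A : Type*} [Ring A] [Algebra ℂ A] (φ : A →ₗ[ℂ] ℂ)
    (μ : MoebiusFamily) (T S : Fin 2 → A) : Prop :=
  ∀ χ : Fin 2 → Bool,
    cumulant φ χ (μ 2 χ) (onePart 2) (fun i => if χ i = true then T 0 else S 0)
      = cumulant φ χ (μ 2 χ) (onePart 2) (fun i => if χ i = true then T 1 else S 1)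

end BiFreeNL

open scoped Matrix

theorem List.exists_prod_map_update_eq_mul_mul {ι R : Type*} [DecidableEq ι] [Monoid R]
    {l : List ι} (hl : l.Nodup) {i : ι} (hi : i ∈ l) (Z : ι → R) :
    ∃ u v : R, ∀ x, (l.map (Function.update Z i x)).prod = u * x * v := by
  obtain ⟨s, t, rfl⟩ := List.append_of_mem hi
  obtain ⟨⟨his, hit⟩, -⟩ : (i ∉ s ∧ i ∉ t) ∧ (s ++ t).Nodup := by
    simpa [List.nodup_middle] using hl
  have hmap (x : R) (r : List ι) (hr : i ∉ r) : r.map (Function.update Z i x) = r.map Z :=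
    List.map_congr_left fun j hj => Function.update_of_ne (by rintro rfl; exact hr hj) _ _
  refine ⟨(s.map Z).prod, (t.map Z).prod, fun x => ?_⟩
  simp [hmap x s his, hmap x t hit, mul_assoc]

attribute [local instance] Matrix.linftyOpNormedAddCommGroup

theorem Matrix.eq_zero_of_eq_mulVec_mulVec {m n R : Type*} [Fintype m] [Fintype n]
    [NormedRing R] {M : Matrix m n R} {N : Matrix n m R} {v : n → R} (hM : ‖M‖ < 1)
    (hN : ‖N‖ < 1) (hv : v = N *ᵥ M *ᵥ v) : v = 0 := by
  have hcontract : ‖v‖ ≤ ‖N‖ * ‖M‖ * ‖v‖ := by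
    conv_lhs => rw [hv]
    rw [mul_assoc]
    exact (N.linfty_opNorm_mulVec _).trans
      (mul_le_mul_of_nonneg_left (M.linfty_opNorm_mulVec v) (norm_nonneg N))
  have hNM : ‖N‖ * ‖M‖ < 1 := mul_lt_one_of_nonneg_of_lt_one_left (norm_nonneg N) hN hM.le
  exact norm_le_zero_iff.1 (by nlinarith [norm_nonneg v])

theorem Finset.prod_add_prod_lt_one {ι : Type*} [Fintype ι] (hι : 2 < Fintype.card ι)
    {c s : ι → ℝ} (hc : ∀ i, 0 < c i) (hs : ∀ i, 0 < s i) (hcs : ∀ i, c i ^ 2 + s i ^ 2 = 1) :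
    ∏ i, c i + ∏ i, s i < 1 := by
  classical
  obtain ⟨a, b, d, -, -, -, hab, had, hbd⟩ := Finset.two_lt_card_iff.1 hι
  have key (g : ι → ℝ) (hg₀ : ∀ i, 0 < g i) (hg₁ : ∀ i, g i < 1) : ∏ i, g i < g a * g b :=
    calc ∏ i, g i ≤ ∏ i ∈ {a, b, d}, g i := Finset.prod_le_prod_of_subset_of_le_one
          (Finset.subset_univ _) (fun i _ => (hg₀ i).le) fun i _ _ => (hg₁ i).le
      _ = g a * g b * g d := by
          rw [Finset.prod_insert (by simp [hab, had]), Finset.prod_pair hbd, mul_assoc]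
      _ < g a * g b := mul_lt_of_lt_one_right (mul_pos (hg₀ a) (hg₀ b)) (hg₁ d)
  have hc₁ (i : ι) : c i < 1 := by nlinarith [hc i, hs i, hcs i]
  have hs₁ (i : ι) : s i < 1 := by nlinarith [hc i, hs i, hcs i]
  calc ∏ i, c i + ∏ i, s i < c a * c b + s a * s b := add_lt_add (key c hc hc₁) (key s hs hs₁)
    _ ≤ 1 := by nlinarith [sq_nonneg (c a - c b), sq_nonneg (s a - s b), hcs a, hcs b]

theorem Real.prod_abs_cos_add_prod_abs_sin_lt_one {ι : Type*} [Fintype ι]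
    (hι : 2 < Fintype.card ι) {α : ι → ℝ} (hα : ∀ i, Real.sin (2 * α i) ≠ 0) :
    ∏ i, |Real.cos (α i)| + ∏ i, |Real.sin (α i)| < 1 := by
  have hα' (i : ι) : Real.sin (α i) ≠ 0 ∧ Real.cos (α i) ≠ 0 := by
    simpa [Real.sin_two_mul, not_or] using hα i
  refine Finset.prod_add_prod_lt_one hι (fun i => abs_pos.2 (hα' i).2)
    (fun i => abs_pos.2 (hα' i).1) fun i => ?_
  rw [sq_abs, sq_abs, Real.cos_sq_add_sin_sq]

theorem Real.sin_two_mul_ne_zero_of_mem_Ioo {θ : ℝ} (hθ : θ ∈ Set.Ioo 0 (Real.pi / 2)) :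
    Real.sin (2 * θ) ≠ 0 :=
  (Real.sin_pos_of_pos_of_lt_pi (by linarith [hθ.1]) (by linarith [hθ.2])).ne'

namespace BiFreeNL

variable {A : Type*} [Ring A] [Algebra ℂ A] {n : ℕ}

theorem exists_linearMap_phiPart_update [DecidableEq (Fin n)] (φ : A →ₗ[ℂ] ℂ)
    {P : Finset (Finset (Fin n))} (hP : IsPartition P) (Z : Fin n → A) (i : Fin n) :
    ∃ f : A →ₗ[ℂ] ℂ, ∀ x, phiPart φ (Function.update Z i x) P = f x := by
  obtain ⟨V, ⟨hVP, hiV⟩, hV⟩ := hP.2 i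
  obtain ⟨u, v, huv⟩ := List.exists_prod_map_update_eq_mul_mul (V.sort_nodup (· ≤ ·))
    ((V.mem_sort _).2 hiV) Z
  have hrest (x : A) (W : Finset (Fin n)) (hW : W ∈ P.erase V) :
      ((W.sort (· ≤ ·)).map (Function.update Z i x)) = (W.sort (· ≤ ·)).map Z := by
    refine List.map_congr_left fun j hj => Function.update_of_ne ?_ _ _
    rintro rfl
    exact Finset.ne_of_mem_erase hW (hV W ⟨Finset.mem_of_mem_erase hW, (W.mem_sort _).1 hj⟩)
  refine ⟨(∏ W ∈ P.erase V, φ ((W.sort (· ≤ ·)).map Z).prod) •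
    φ ∘ₗ LinearMap.mulLeft ℂ u ∘ₗ LinearMap.mulRight ℂ v, fun x => ?_⟩
  rw [phiPart, ← Finset.mul_prod_erase _ _ hVP, Finset.prod_congr rfl fun W hW => by
    rw [hrest x W hW], huv]
  simp [mul_assoc, mul_comm]

open scoped Classical in
theorem exists_linearMap_cumulant_update [DecidableEq (Fin n)] (φ : A →ₗ[ℂ] ℂ)
    (χ : Fin n → Bool) (μn : Finset (Finset (Fin n)) → Finset (Finset (Fin n)) → ℂ)
    (P : Finset (Finset (Fin n))) (Z : Fin n → A) (i : Fin n) :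
    ∃ f : A →ₗ[ℂ] ℂ, ∀ x, cumulant φ χ μn P (Function.update Z i x) = f x := by
  have h : ∀ σ ∈ (BNC χ).filter fun σ => Refines σ P,
      ∃ f : A →ₗ[ℂ] ℂ, ∀ x, phiPart φ (Function.update Z i x) σ = f x := fun σ hσ =>
    exists_linearMap_phiPart_update φ (Finset.mem_filter.1 (Finset.mem_filter.1 hσ).1).2.1 Z i
  choose! f hf using h
  exact ⟨∑ σ ∈ (BNC χ).filter fun σ => Refines σ P, μn σ P • f σ, fun x => by
    simp only [cumulant, LinearMap.coe_sum, Finset.sum_apply, LinearMap.smul_apply, smul_eq_mul]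
    exact Finset.sum_congr rfl fun σ hσ => by rw [hf σ hσ, mul_comm]⟩

@[simps]
noncomputable def cumulantMultilinear (φ : A →ₗ[ℂ] ℂ) (χ : Fin n → Bool)
    (μn : Finset (Finset (Fin n)) → Finset (Finset (Fin n)) → ℂ)
    (P : Finset (Finset (Fin n))) : MultilinearMap ℂ (fun _ : Fin n => A) ℂ where
  toFun := cumulant φ χ μn P
  map_update_add' Z i x y := by
    obtain ⟨f, hf⟩ := exists_linearMap_cumulant_update φ χ μn P Z i
    simp only [hf, map_add]
  map_update_smul' Z i c x := by
    obtain ⟨f, hf⟩ := exists_linearMap_cumulant_update φ χ μn P Z i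
    simp only [hf, map_smul]

noncomputable def pairCumulant (φ : A →ₗ[ℂ] ℂ) (μ : MoebiusFamily) (χ : Fin n → Bool)
    (T S : A) : ℂ :=
  cumulant φ χ (μ n χ) (onePart n) fun i => if χ i = true then T else S

theorem cumulant_sum_smul_of_twoFacedBiFree {φ : A →ₗ[ℂ] ℂ} {μ : MoebiusFamily}
    {T S : Fin 2 → A} (hbf : TwoFacedBiFree φ μ T S) (hn : 2 ≤ n) (χ : Fin n → Bool)
    (c : Fin n → Fin 2 → ℂ) :
    cumulant φ χ (μ n χ) (onePart n) (fun i => ∑ k, c i k • if χ i = true then T k else S k)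
      = ∑ k, (∏ i, c i k) * pairCumulant φ μ χ (T k) (S k) := by
  have : Nonempty (Fin n) := ⟨⟨0, by omega⟩⟩
  let const : Fin 2 ↪ (Fin n → Fin 2) := ⟨Function.const _, Function.const_injective⟩
  have hmixed (ε : Fin n → Fin 2) (hε : ε ∉ Finset.univ.map const) :
      (∏ i, c i (ε i)) * cumulant φ χ (μ n χ) (onePart n)
        (fun i => if χ i = true then T (ε i) else S (ε i)) = 0 := by
    rw [hbf n hn χ ε ?_, mul_zero]
    by_contra! h
    exact hε (Finset.mem_map.2 ⟨ε ⟨0, by omega⟩, Finset.mem_univ _, funext fun i => h _ _⟩)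
  change cumulantMultilinear φ χ (μ n χ) (onePart n) _ = _
  simp only [MultilinearMap.map_sum, MultilinearMap.map_smul_univ, smul_eq_mul,
    cumulantMultilinear_apply]
  rw [← Finset.sum_subset (Finset.subset_univ _) fun ε _ hε => hmixed ε hε, Finset.sum_map]
  rfl

noncomputable def rotate (θ : ℝ) (X : Fin 2 → A) : Fin 2 → A :=
  ![(Real.cos θ : ℂ) • X 0 + (Real.sin θ : ℂ) • X 1,
    (-(Real.sin θ : ℂ)) • X 0 + (Real.cos θ : ℂ) • X 1]

noncomputable def rotationMatrix (θ : ℝ) : Matrix (Fin 2) (Fin 2) ℂ :=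
  !![Real.cos θ, Real.sin θ; -Real.sin θ, Real.cos θ]

theorem rotate_apply (θ : ℝ) (X : Fin 2 → A) (j : Fin 2) :
    rotate θ X j = ∑ k, rotationMatrix θ j k • X k := by
  fin_cases j <;> simp [rotate, rotationMatrix]

theorem rotate_neg_rotate (θ : ℝ) (X : Fin 2 → A) : rotate (-θ) (rotate θ X) = X := by
  ext j
  fin_cases j <;>
    simp only [rotate, Real.cos_neg, Real.sin_neg, Complex.ofReal_neg, neg_neg, Fin.zero_eta,
      Fin.mk_one, Matrix.cons_val_zero, Matrix.cons_val_one] <;>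
    match_scalars
  · linear_combination Complex.sin_sq_add_cos_sq (θ : ℂ)
  · ring
  · ring
  · linear_combination Complex.sin_sq_add_cos_sq (θ : ℂ)

noncomputable def rotationProd (α : Fin n → ℝ) : Matrix (Fin 2) (Fin 2) ℂ :=
  Matrix.of fun j k => ∏ i, rotationMatrix (α i) j k

theorem sum_norm_rotationProd (α : Fin n → ℝ) (j : Fin 2) :
    ∑ k, ‖rotationProd α j k‖ = ∏ i, |Real.cos (α i)| + ∏ i, |Real.sin (α i)| := by
  fin_cases j <;>
    simp only [rotationProd, rotationMatrix, Matrix.of_apply, Matrix.cons_val',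
      Matrix.cons_val_fin_one, Fin.zero_eta, Fin.mk_one, Matrix.cons_val_zero,
      Matrix.cons_val_one, norm_prod, Fin.sum_univ_two, norm_neg, Complex.norm_real,
      Real.norm_eq_abs, add_comm]

theorem norm_rotationProd (α : Fin n → ℝ) :
    ‖rotationProd α‖ = ∏ i, |Real.cos (α i)| + ∏ i, |Real.sin (α i)| := by
  have hρ : 0 ≤ ∏ i, |Real.cos (α i)| + ∏ i, |Real.sin (α i)| := by positivity
  have hrow (j : Fin 2) : ∑ k, ‖rotationProd α j k‖₊ =
      (∏ i, |Real.cos (α i)| + ∏ i, |Real.sin (α i)|).toNNReal :=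
    NNReal.eq (by rw [Real.coe_toNNReal _ hρ]; push_cast; exact sum_norm_rotationProd α j)
  rw [Matrix.linfty_opNorm_def, Finset.sup_congr rfl fun j _ => hrow j,
    Finset.sup_const Finset.univ_nonempty, Real.coe_toNNReal _ hρ]

theorem norm_rotationProd_lt_one (hn : 2 < n) {α : Fin n → ℝ}
    (hα : ∀ i, Real.sin (2 * α i) ≠ 0) : ‖rotationProd α‖ < 1 := by
  rw [norm_rotationProd]
  exact Real.prod_abs_cos_add_prod_abs_sin_lt_one (by rwa [Fintype.card_fin]) hα

theorem pairCumulant_rotate {φ : A →ₗ[ℂ] ℂ} {μ : MoebiusFamily}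
    {T S : Fin 2 → A} (hbf : TwoFacedBiFree φ μ T S) (hn : 2 ≤ n) (χ : Fin n → Bool)
    (θl θr : ℝ) :
    (fun j => pairCumulant φ μ χ (rotate θl T j) (rotate θr S j))
      = rotationProd (fun i => if χ i = true then θl else θr) *ᵥ
          fun k => pairCumulant φ μ χ (T k) (S k) := by
  ext j
  simp only [Matrix.mulVec, dotProduct, rotationProd, Matrix.of_apply]
  rw [← cumulant_sum_smul_of_twoFacedBiFree hbf hn χ]
  unfold pairCumulant
  congr 1
  ext i
  split_ifs <;> simp [rotate_apply]

end BiFreeNL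

open BiFreeNL in
theorem kac_loeve_two_angles_general
    {A : Type*} [Ring A] [Algebra ℂ A]
    (φ : A →ₗ[ℂ] ℂ)
    (μ : MoebiusFamily)
    (T S : Fin 2 → A)
    (hbf : TwoFacedBiFree φ μ T S)
    (θl θr : ℝ) (hθl : θl ∈ Set.Ioo 0 (Real.pi / 2)) (hθr : θr ∈ Set.Ioo 0 (Real.pi / 2))
    (hbf34 : TwoFacedBiFree φ μ
      ![(Real.cos θl : ℂ) • T 0 + (Real.sin θl : ℂ) • T 1,
        (-(Real.sin θl : ℂ)) • T 0 + (Real.cos θl : ℂ) • T 1]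
      ![(Real.cos θr : ℂ) • S 0 + (Real.sin θr : ℂ) • S 1,
        (-(Real.sin θr : ℂ)) • S 0 + (Real.cos θr : ℂ) • S 1]) :
    IsBiFreeCentralLimit φ μ (T 0) (S 0) ∧ IsBiFreeCentralLimit φ μ (T 1) (S 1) := by
  change TwoFacedBiFree φ μ (rotate θl T) (rotate θr S) at hbf34
  suffices h : ∀ n, 3 ≤ n → ∀ χ : Fin n → Bool,
      (fun k => pairCumulant φ μ χ (T k) (S k)) = 0 from
    ⟨fun n hn χ => congrFun (h n hn χ) 0, fun n hn χ => congrFun (h n hn χ) 1⟩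
  intro n hn χ
  have hforward := pairCumulant_rotate hbf (by omega) χ θl θr
  have hbackward := pairCumulant_rotate hbf34 (by omega) χ (-θl) (-θr)
  rw [rotate_neg_rotate, rotate_neg_rotate, hforward] at hbackward
  have hl := Real.sin_two_mul_ne_zero_of_mem_Ioo hθl
  have hr := Real.sin_two_mul_ne_zero_of_mem_Ioo hθr
  exact Matrix.eq_zero_of_eq_mulVec_mulVec
    (norm_rotationProd_lt_one hn fun i => by split_ifs <;> assumption)
    (norm_rotationProd_lt_one hn fun i => by split_ifs <;> simpa [mul_neg])
    hbackward

open BiFreeNL in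
/-- **Two-angle Kac/Loeve proposition.** -/
theorem kac_loeve_two_angles
    {A : Type*} [Ring A] [Algebra ℂ A]
    (φ : A →ₗ[ℂ] ℂ) (hφ : φ 1 = 1)
    (μ : MoebiusFamily) (hμ : ∀ (n : ℕ) (χ : Fin n → Bool), IsMoebius χ (μ n χ))
    (T S : Fin 2 → A)
    (hcent : ∀ k, φ (T k) = 0 ∧ φ (S k) = 0)
    (hbf : TwoFacedBiFree φ μ T S)
    (θl θr : ℝ) (hθl : θl ∈ Set.Ioo 0 (Real.pi / 2)) (hθr : θr ∈ Set.Ioo 0 (Real.pi / 2))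
    (hbf34 : TwoFacedBiFree φ μ
      ![(Real.cos θl : ℂ) • T 0 + (Real.sin θl : ℂ) • T 1,
        (-(Real.sin θl : ℂ)) • T 0 + (Real.cos θl : ℂ) • T 1]
      ![(Real.cos θr : ℂ) • S 0 + (Real.sin θr : ℂ) • S 1,
        (-(Real.sin θr : ℂ)) • S 0 + (Real.cos θr : ℂ) • S 1]) :
    IsBiFreeCentralLimit φ μ (T 0) (S 0) ∧ IsBiFreeCentralLimit φ μ (T 1) (S 1) :=
  kac_loeve_two_angles_general φ μ T S hbf θl θr hθl hθr hbf34
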